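/- Let L ∈ T with root system R. Then for each β ∈ R and each non-isotropic α ∈ R, the α-root string through β is unbroken: there exist d, u ∈ ℤ_{≥0} with d - u = 2(β,α)/(α,α), such that for n ∈ ℤ, β + nα ∈ R if and only if -d ≤ n ≤ u. -/
import Mathlib


open scoped Classical

namespace Gen

variable (F L : Type*) [Field F] [CharZero F] [LieRing L] [LieAlgebra F L]

/-- The weight space of a linear functional `α` on a subalgebra `H`. -/
def wt (H : LieSubalgebra F L) (α : Module.Dual F H) : Submodule F L where
  carrier := {x : L | ∀ h : H, ⁅(h : L), x⁆ = α h • x}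
  add_mem' := by
    intro a b ha hb h
    rw [lie_add, ha h, hb h, smul_add]
  zero_mem' := by intro h; simp
  smul_mem' := by
    intro c x hx h
    rw [lie_smul, hx h, smul_comm]

/-- Data for axioms (T1) and (T2): a non-degenerate symmetric invariant bilinear form,
a finite dimensional split toral subalgebra `H` on which the form is non-degenerate,
together with the representatives `t_α ∈ H` of linear functionals on `H`. -/
structure TData where
  B : L →ₗ[F] L →ₗ[F] F
  bsymm : ∀ x y, B x y = B y x
  binv : ∀ x y z, B ⁅x, y⁆ z = B x ⁅y, z⁆
  bnondeg : ∀ x, (∀ y, B x y = 0) → x = 0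
  H : LieSubalgebra F L
  hne : H ≠ ⊥
  hfin : FiniteDimensional F H
  hnondeg : ∀ h : H, (∀ h' : H, B h h' = 0) → h = 0
  decomp : DirectSum.IsInternal (wt F L H)
  t : Module.Dual F H → H
  tspec : ∀ (α : Module.Dual F H) (h : H), B (t α) h = α h

variable {F L}

namespace TData

variable (T : TData F L)

/-- The form transferred to the dual of `H`: `(α, β) = (t_α, t_β)`. -/
def pr (α β : Module.Dual F T.H) : F := T.B (T.t α) (T.t β)

/-- The root system `R = {α : L_α ≠ 0}`. -/
def R : Set (Module.Dual F T.H) := {α | wt F L T.H α ≠ ⊥}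

/-- Non-isotropic roots. -/
def Rx : Set (Module.Dual F T.H) := {α | α ∈ T.R ∧ T.pr α α ≠ 0}

/-- Isotropic roots. -/
def R0 : Set (Module.Dual F T.H) := {α | α ∈ T.R ∧ T.pr α α = 0}

/-- The core: the subalgebra generated by the non-isotropic root spaces. -/
def core : LieSubalgebra F L :=
  LieSubalgebra.lieSpan F L (⋃ α ∈ T.Rx, (wt F L T.H α : Set L))

end TData

variable (F L)

/-- A Lie algebra in the class 𝒯: axioms (T1)–(T6). -/
structure TAlg extends TData F L where
  t3a : ∀ δ ∈ toTData.R0, ∃ x ∈ wt F L toTData.H δ, ∃ y ∈ wt F L toTData.H (-δ),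
          ⁅x, y⁆ = (toTData.t δ : L)
  t3b : ∀ α ∈ toTData.Rx, ∀ x ∈ wt F L toTData.H α, x ≠ 0 →
          ∃ y ∈ wt F L toTData.H (-α), ⁅x, y⁆ = (toTData.t α : L)
  t4 : ∀ α ∈ toTData.Rx, ∀ x ∈ wt F L toTData.H α, ∀ y : L,
          ∃ n : ℕ, ((LieAlgebra.ad F L x) ^ n) y = 0
  t5a : ∀ S1 S2 : Set (Module.Dual F toTData.H), S1.Nonempty → S2.Nonempty →
          S1 ∪ S2 = toTData.Rx → Disjoint S1 S2 →
          ∃ a ∈ S1, ∃ b ∈ S2, toTData.pr a b ≠ 0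
  t5b : ∀ δ ∈ toTData.R0, ∃ α ∈ toTData.Rx, α + δ ∈ toTData.R
  t6free : Module.Free ℤ (AddSubgroup.closure toTData.R0)
  t6fin : Module.Finite ℤ (AddSubgroup.closure toTData.R0)

end Gen

open scoped Classical

set_option linter.unusedSectionVars false
set_option maxHeartbeats 1600000

namespace Gen

variable {F L : Type*} [Field F] [CharZero F] [LieRing L] [LieAlgebra F L]

lemma mem_wt {H : LieSubalgebra F L} {α : Module.Dual F H} {x : L} :
    x ∈ wt F L H α ↔ ∀ h : H, ⁅(h : L), x⁆ = α h • x := Iff.rfl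

lemma lie_mem_wt {H : LieSubalgebra F L} {γ δ : Module.Dual F H} {x y : L}
    (hx : x ∈ wt F L H γ) (hy : y ∈ wt F L H δ) : ⁅x, y⁆ ∈ wt F L H (γ + δ) := by
  intro h
  rw [leibniz_lie, hx h, hy h, lie_smul, smul_lie]
  simp [add_smul]

lemma wt_ne_bot_of_mem {H : LieSubalgebra F L} {α : Module.Dual F H} {x : L}
    (hx : x ∈ wt F L H α) (hx0 : x ≠ 0) : wt F L H α ≠ ⊥ := by
  intro h
  exact hx0 (by simpa [h] using hx)

lemma iter_mem_wt {H : LieSubalgebra F L} {ρ δ : Module.Dual F H} {y x : L}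
    (hy : y ∈ wt F L H ρ) (hx : x ∈ wt F L H δ) (i : ℕ) :
    (fun z => ⁅y, z⁆)^[i] x ∈ wt F L H (δ + i • ρ) := by
  induction i with
  | zero => simpa using hx
  | succ n ih =>
      rw [Function.iterate_succ_apply']
      have := lie_mem_wt hy ih
      have he : ρ + (δ + n • ρ) = δ + (n+1) • ρ := by
        rw [succ_nsmul]; abel
      rwa [he] at this

namespace TData

variable (T : TData F L)

lemma pr_eq_apply (γ δ : Module.Dual F T.H) : T.pr γ δ = γ (T.t δ) := T.tspec γ (T.t δ)

lemma pr_symm (γ δ : Module.Dual F T.H) : T.pr γ δ = T.pr δ γ := T.bsymm _ _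

lemma pr_add_left (γ γ' δ : Module.Dual F T.H) :
    T.pr (γ + γ') δ = T.pr γ δ + T.pr γ' δ := by
  simp [pr_eq_apply]

lemma pr_zsmul_left (n : ℤ) (γ δ : Module.Dual F T.H) :
    T.pr (n • γ) δ = (n : F) * T.pr γ δ := by
  simp [pr_eq_apply, zsmul_eq_mul]

lemma pr_nsmul_left (n : ℕ) (γ δ : Module.Dual F T.H) :
    T.pr (n • γ) δ = (n : F) * T.pr γ δ := by
  rw [← natCast_zsmul, pr_zsmul_left, Int.cast_natCast]

lemma pr_neg_left (γ δ : Module.Dual F T.H) : T.pr (-γ) δ = - T.pr γ δ := by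
  simp [pr_eq_apply]

lemma pr_neg_right (γ δ : Module.Dual F T.H) : T.pr γ (-δ) = - T.pr γ δ := by
  rw [pr_symm, pr_neg_left, pr_symm]

lemma pr_add_right (γ δ δ' : Module.Dual F T.H) :
    T.pr γ (δ + δ') = T.pr γ δ + T.pr γ δ' := by
  rw [pr_symm, pr_add_left, pr_symm T δ, pr_symm T δ']

lemma pr_zsmul_right (n : ℤ) (γ δ : Module.Dual F T.H) :
    T.pr γ (n • δ) = (n : F) * T.pr γ δ := by
  rw [pr_symm, pr_zsmul_left, pr_symm]

lemma t_neg (γ : Module.Dual F T.H) : T.t (-γ) = - T.t γ := by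
  have h : T.t (-γ) + T.t γ = 0 := by
    apply T.hnondeg
    intro h'
    have h1 : ((T.t (-γ) + T.t γ : T.H) : L) = (T.t (-γ) : L) + (T.t γ : L) := rfl
    show T.B _ _ = 0
    rw [h1, map_add, LinearMap.add_apply, T.tspec (-γ) h', T.tspec γ h']
    simp
  linear_combination (norm := module) h

end TData

namespace TAlg

variable (T : TAlg F L)

lemma neg_mem_Rx {α' : Module.Dual F T.toTData.H} (h : α' ∈ T.toTData.Rx) :
    -α' ∈ T.toTData.Rx := by
  obtain ⟨hR, hk⟩ := h
  obtain ⟨x, hx, hx0⟩ := Submodule.ne_bot_iff _ |>.mp hR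
  obtain ⟨y, hy, hxy⟩ := T.t3b α' ⟨hR, hk⟩ x hx hx0
  have ht0 : (T.toTData.t α' : L) ≠ 0 := by
    intro h0
    apply hk
    show T.toTData.B _ _ = 0
    rw [h0]
    simp
  have hy0 : y ≠ 0 := by
    rintro rfl
    rw [lie_zero] at hxy
    exact ht0 hxy.symm
  constructor
  · exact wt_ne_bot_of_mem hy hy0
  · show T.toTData.pr _ _ ≠ 0
    rw [TData.pr_eq_apply, TData.t_neg]
    simpa [TData.pr_eq_apply] using hk

lemma string_down {α' δ : Module.Dual F T.toTData.H} (hα' : α' ∈ T.toTData.Rx)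
    {e f w : L}
    (he : e ∈ wt F L T.toTData.H α') (hf : f ∈ wt F L T.toTData.H (-α'))
    (hef : ⁅e, f⁆ = (T.toTData.t α' : L))
    (hw : w ∈ wt F L T.toTData.H δ) (hw0 : w ≠ 0) (hew : ⁅e, w⁆ = 0) :
    ∃ m : ℕ, ((m : F) * T.toTData.pr α' α' = 2 * T.toTData.pr δ α') ∧
      ∀ i : ℕ, i ≤ m → wt F L T.toTData.H (δ + i • (-α')) ≠ ⊥ := by
  set k : F := α' (T.toTData.t α') with hkdef
  set lam : F := δ (T.toTData.t α') with hlamdef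
  set g : ℕ → L := fun i => (fun z => ⁅f, z⁆)^[i] w with hgdef
  have hg : ∀ i, g i ∈ wt F L T.toTData.H (δ + i • (-α')) := iter_mem_wt hf hw
  have hgs : ∀ i, g (i+1) = ⁅f, g i⁆ := fun i => Function.iterate_succ_apply' _ _ _
  have heig : ∀ i : ℕ, ⁅(T.toTData.t α' : L), g i⁆ = (lam - i * k) • g i := by
    intro i
    rw [hg i (T.toTData.t α')]
    congr 1
    simp
    ring
  set c : ℕ → F := fun i => (i : F) * lam - (i.choose 2 : F) * k with hcdef
  have hcs : ∀ i : ℕ, c (i+1) = c i + (lam - i * k) := by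
    intro i
    simp only [hcdef]
    rw [Nat.choose_succ_succ, Nat.choose_one_right]
    push_cast
    ring
  have hce : ∀ i : ℕ, ⁅e, g (i+1)⁆ = c (i+1) • g i := by
    intro i
    induction i with
    | zero =>
        have hg0 : g 0 = w := rfl
        rw [hgs 0, leibniz_lie, hef, hg0, hew, lie_zero, add_zero, ← hg0, heig 0]
        congr 1
        rw [hcs 0]
        simp [hcdef]
    | succ n ih =>
        rw [hgs (n+1), leibniz_lie, hef, heig (n+1), ih, lie_smul, ← hgs n,
          ← add_smul]
        congr 1
        rw [hcs (n+1)]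
        push_cast
        ring
  -- nilpotency of ad f
  have hnf : ∃ n, g n = 0 := by
    obtain ⟨n, hn⟩ := T.t4 (-α') (T.neg_mem_Rx hα') f hf w
    refine ⟨n, ?_⟩
    have hco : ⇑(LieAlgebra.ad F L f) = fun z => ⁅f, z⁆ := funext fun z => rfl
    rw [Module.End.pow_apply, hco] at hn
    exact hn
  obtain ⟨j, hj0, hgne⟩ : ∃ j, g j = 0 ∧ ∀ i, i < j → g i ≠ 0 :=
    ⟨Nat.find hnf, Nat.find_spec hnf, fun i hi => Nat.find_min hnf hi⟩
  have hjpos : 1 ≤ j := by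
    rcases Nat.eq_zero_or_pos j with h | h
    · exfalso
      apply hw0
      have h0 : g 0 = 0 := by rw [h] at hj0; exact hj0
      exact h0
    · exact h
  have hcj : c j = 0 := by
    have h1 : ⁅e, g j⁆ = 0 := by rw [hj0, lie_zero]
    obtain ⟨j', rfl⟩ : ∃ j', j = j' + 1 := ⟨j - 1, by omega⟩
    rw [hce j'] at h1
    rcases smul_eq_zero.mp h1 with h | h
    · exact h
    · exact absurd h (hgne j' (by omega))
  -- derive 2 lam = (j-1) k
  have hk2 : ∀ n : ℕ, 2 * (n.choose 2) = n * (n - 1) := by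
    intro n
    induction n with
    | zero => simp
    | succ m ih =>
        rw [Nat.choose_succ_succ, Nat.choose_one_right]
        simp only [Nat.add_sub_cancel]
        rw [Nat.mul_add, ih]
        cases m with
        | zero => simp
        | succ l => simp only [Nat.add_sub_cancel]; ring
  have hcj' : (j : F) * lam - ((j.choose 2 : ℕ) : F) * k = 0 := hcj
  have hc2 : (j : F) * lam = ((j.choose 2 : ℕ) : F) * k := by linear_combination hcj'
  have h4 : 2 * ((j.choose 2 : ℕ) : F) = (j : F) * ((j - 1 : ℕ) : F) := by
    have h5 : ((2 * j.choose 2 : ℕ) : F) = ((j * (j - 1) : ℕ) : F) := by rw [hk2 j]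
    push_cast at h5
    linear_combination h5
  have hjF : (j : F) ≠ 0 := Nat.cast_ne_zero.mpr (by omega)
  have hmain : 2 * lam = ((j - 1 : ℕ) : F) * k := by
    apply mul_left_cancel₀ hjF
    calc (j : F) * (2 * lam) = 2 * ((j : F) * lam) := by ring
      _ = 2 * (((j.choose 2 : ℕ) : F) * k) := by rw [hc2]
      _ = (2 * ((j.choose 2 : ℕ) : F)) * k := by ring
      _ = ((j : F) * ((j - 1 : ℕ) : F)) * k := by rw [h4]
      _ = (j : F) * (((j - 1 : ℕ) : F) * k) := by ring
  refine ⟨j - 1, ?_, ?_⟩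
  · rw [TData.pr_eq_apply, TData.pr_eq_apply, ← hkdef, ← hlamdef, hmain]

  · intro i hi
    exact wt_ne_bot_of_mem (hg i) (hgne i (by omega))

lemma dual_index {H : LieSubalgebra F L} (β' α' : Module.Dual F H) (p i : ℕ) :
    β' + p • α' + i • (-α') = β' + ((p : ℤ) - (i : ℤ)) • α' := by
  calc β' + p • α' + i • (-α')
      = β' + ((p : ℤ) • α' + (i : ℤ) • (-α')) := by
        rw [natCast_zsmul, natCast_zsmul, add_assoc]
    _ = β' + ((p : ℤ) - (i : ℤ)) • α' := by
        rw [smul_neg, ← neg_smul, ← add_smul, ← sub_eq_add_neg]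

lemma interval {α' β' : Module.Dual F T.toTData.H} (hα' : α' ∈ T.toTData.Rx)
    (hβ' : β' ∈ T.toTData.R) :
    ∃ p m : ℕ, ((m : F) * T.toTData.pr α' α' =
        2 * T.toTData.pr β' α' + 2 * (p : F) * T.toTData.pr α' α') ∧
      ∀ i : ℕ, i ≤ m → β' + ((p : ℤ) - (i : ℤ)) • α' ∈ T.toTData.R := by
  obtain ⟨v, hv, hv0⟩ := (Submodule.ne_bot_iff _).mp hβ'
  obtain ⟨e, he, he0⟩ := (Submodule.ne_bot_iff _).mp hα'.1
  obtain ⟨f, hf, hef⟩ := T.t3b α' hα' e he he0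
  set gE : ℕ → L := fun i => (fun z => ⁅e, z⁆)^[i] v with hgEdef
  have hgE : ∀ i, gE i ∈ wt F L T.toTData.H (β' + i • α') := iter_mem_wt he hv
  have hnE : ∃ n, gE n = 0 := by
    obtain ⟨n, hn⟩ := T.t4 α' hα' e he v
    have hco : ⇑(LieAlgebra.ad F L e) = fun z => ⁅e, z⁆ := funext fun z => rfl
    rw [Module.End.pow_apply, hco] at hn
    exact ⟨n, hn⟩
  obtain ⟨jE, hjE0, hjEne⟩ : ∃ j, gE j = 0 ∧ ∀ i, i < j → gE i ≠ 0 :=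
    ⟨Nat.find hnE, Nat.find_spec hnE, fun i hi => Nat.find_min hnE hi⟩
  have hjEpos : 1 ≤ jE := by
    rcases Nat.eq_zero_or_pos jE with h | h
    · exfalso
      apply hv0
      have h0 : gE 0 = 0 := by rw [h] at hjE0; exact hjE0
      exact h0
    · exact h
  set p : ℕ := jE - 1 with hpdef
  have hw0 : gE p ≠ 0 := hjEne p (by omega)
  have hew : ⁅e, gE p⁆ = 0 := by
    have h1 : gE (p + 1) = ⁅e, gE p⁆ := Function.iterate_succ_apply' _ _ _
    have h2 : p + 1 = jE := by omega
    rw [← h1, h2, hjE0]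
  obtain ⟨m, hm1, hm2⟩ := T.string_down hα' he hf hef (hgE p) hw0 hew
  refine ⟨p, m, ?_, ?_⟩
  · rw [TData.pr_add_left, TData.pr_nsmul_left] at hm1
    linear_combination hm1
  · intro i hi
    have h3 := hm2 i hi
    rw [dual_index] at h3
    exact h3

end TAlg

end Gen

/-- For `L ∈ 𝒯`, `β ∈ R` and non-isotropic `α ∈ R`, the `α`-root string
through `β` is unbroken: there are `d, u ∈ ℤ≥0` with `d - u = 2(β,α)/(α,α)` and, for
`n ∈ ℤ`, `β + nα ∈ R` iff `-d ≤ n ≤ u`. -/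
theorem root_string
    (F L : Type*) [Field F] [CharZero F] [LieRing L] [LieAlgebra F L]
    (T : Gen.TAlg F L)
    (β : Module.Dual F T.toTData.H) (hβ : β ∈ T.toTData.R)
    (α : Module.Dual F T.toTData.H) (hα : α ∈ T.toTData.Rx) :
    ∃ d u : ℕ, ((d : F) - (u : F)) * T.toTData.pr α α = 2 * T.toTData.pr β α ∧
      ∀ n : ℤ, (β + n • α ∈ T.toTData.R ↔ -(d : ℤ) ≤ n ∧ n ≤ (u : ℤ)) := by
  classical
  have hK0 : T.toTData.pr α α ≠ 0 := hα.2
  have hprn : ∀ n : ℤ, T.toTData.pr (β + n • α) α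
      = T.toTData.pr β α + (n : F) * T.toTData.pr α α := by
    intro n
    rw [Gen.TData.pr_add_left, Gen.TData.pr_zsmul_left]
  have hP0 : β + (0 : ℤ) • α ∈ T.toTData.R := by simpa using hβ
  -- the integer γ with γ • (α,α) = 2 (β,α)
  obtain ⟨γ, hγk⟩ : ∃ γ : ℤ, (γ : F) * T.toTData.pr α α = 2 * T.toTData.pr β α := by
    obtain ⟨p0, m0, hm0, _⟩ := T.interval hα hβ
    exact ⟨(m0 : ℤ) - 2 * p0, by push_cast; linear_combination hm0⟩
  have hcancel : ∀ a b : ℤ, (a : F) * T.toTData.pr α α = (b : F) * T.toTData.pr α α → a = b := by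
    intro a b h
    have h2 := mul_right_cancel₀ hK0 h
    exact_mod_cast h2
  -- Up strings
  have Up : ∀ n : ℤ, β + n • α ∈ T.toTData.R →
      ∃ (p m : ℕ), (m : ℤ) = γ + 2 * n + 2 * (p : ℤ) ∧
        ∀ i : ℕ, i ≤ m → β + (n + (p : ℤ) - (i : ℤ)) • α ∈ T.toTData.R := by
    intro n hn
    obtain ⟨p, m, h1, h2⟩ := T.interval hα hn
    rw [hprn n] at h1
    refine ⟨p, m, ?_, ?_⟩
    · apply hcancel
      push_cast
      linear_combination h1 - hγk
    · intro i hi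
      have h3 := h2 i hi
      rw [add_assoc, ← add_smul] at h3
      have h4 : n • α + ((p : ℤ) - (i : ℤ)) • α = (n + (p : ℤ) - (i : ℤ)) • α := by
        rw [← add_smul]; congr 1; ring
      rw [show n + ((p : ℤ) - (i : ℤ)) = n + (p : ℤ) - (i : ℤ) from by ring] at h3
      exact h3
  -- Down strings
  have hknn : T.toTData.pr (-α) (-α) = T.toTData.pr α α := by
    rw [Gen.TData.pr_neg_left, Gen.TData.pr_neg_right, neg_neg]
  have Down : ∀ n : ℤ, β + n • α ∈ T.toTData.R →
      ∃ (p m : ℕ), (m : ℤ) = -γ - 2 * n + 2 * (p : ℤ) ∧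
        ∀ i : ℕ, i ≤ m → β + (n - (p : ℤ) + (i : ℤ)) • α ∈ T.toTData.R := by
    intro n hn
    obtain ⟨p, m, h1, h2⟩ := T.interval (T.neg_mem_Rx hα) hn
    rw [hknn, Gen.TData.pr_neg_right, hprn n] at h1
    refine ⟨p, m, ?_, ?_⟩
    · apply hcancel
      push_cast
      linear_combination h1 + hγk
    · intro i hi
      have h3 := h2 i hi
      rw [smul_neg, ← neg_smul, neg_sub, add_assoc, ← add_smul] at h3
      rw [show n + ((i : ℤ) - (p : ℤ)) = n - (p : ℤ) + (i : ℤ) from by ring] at h3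
      exact h3
  -- the quadratic Q
  have hQ : ∀ n : ℤ, T.toTData.pr (β + n • α) (β + n • α)
      = T.toTData.pr β β + (n : F) * (γ : F) * T.toTData.pr α α
        + (n : F) ^ 2 * T.toTData.pr α α := by
    intro n
    rw [Gen.TData.pr_add_right, Gen.TData.pr_zsmul_right, Gen.TData.pr_add_left,
      Gen.TData.pr_zsmul_left, Gen.TData.pr_add_left, Gen.TData.pr_zsmul_left,
      show T.toTData.pr α β = T.toTData.pr β α from Gen.TData.pr_symm _ _ _]
    linear_combination (-(n : F)) * hγk
  -- integrality of 2 (α, β+nα) / (β+nα, β+nα)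
  have Qint : ∀ n : ℤ, β + n • α ∈ T.toTData.R →
      T.toTData.pr (β + n • α) (β + n • α) ≠ 0 →
      ∃ M : ℤ, (M : F) * T.toTData.pr (β + n • α) (β + n • α)
        = ((γ : F) + 2 * (n : F)) * T.toTData.pr α α := by
    intro n hn hQn
    obtain ⟨p, m, h1, _⟩ := T.interval (⟨hn, hQn⟩ : β + n • α ∈ T.toTData.Rx) hα.1
    refine ⟨(m : ℤ) - 2 * (p : ℤ), ?_⟩
    push_cast
    have h5 : T.toTData.pr α (β + n • α) = T.toTData.pr (β + n • α) α :=
      Gen.TData.pr_symm _ _ _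
    linear_combination h1 + 2 * h5 + 2 * hprn n - hγk
  -- two roots of Q determine the sum of indices
  have key3 : ∀ n1 n2 : ℤ, n1 ≠ n2 → T.toTData.pr (β + n1 • α) (β + n1 • α) = 0 →
      T.toTData.pr (β + n2 • α) (β + n2 • α) = 0 → n1 + n2 = -γ := by
    intro n1 n2 hne h1 h2
    have e1 := hQ n1
    rw [h1] at e1
    have e2 := hQ n2
    rw [h2] at e2
    have e3 : ((n1 : F) - (n2 : F)) * (((γ : F) + (n1 : F) + (n2 : F)) * T.toTData.pr α α) = 0 := by
      linear_combination e2 - e1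
    rcases mul_eq_zero.mp e3 with h | h
    · exfalso
      apply hne
      have h4 : (n1 : F) = (n2 : F) := by linear_combination h
      exact_mod_cast h4
    · rcases mul_eq_zero.mp h with h' | h'
      · have h5 : ((γ + n1 + n2 : ℤ) : F) = 0 := by push_cast; linear_combination h'
        have h6 : γ + n1 + n2 = 0 := by exact_mod_cast h5
        omega
      · exact absurd h' hK0
  -- boundedness of the string
  have hbdd : ∃ N : ℤ, ∀ n : ℤ, β + n • α ∈ T.toTData.R → |n| ≤ N := by
    by_contra hcon
    push_neg at hcon
    have hg2 : ∀ nn : ℤ, |γ| < |nn| → (γ : F) + 2 * (nn : F) ≠ 0 := by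
      intro nn hnn h
      have h5 : ((γ + 2 * nn : ℤ) : F) = 0 := by push_cast; linear_combination h
      have h0 : γ + 2 * nn = 0 := by exact_mod_cast h5
      have habs : |γ| = 2 * |nn| := by
        rw [show γ = -2 * nn from by omega]
        rw [abs_mul]
        norm_num
      linarith [abs_nonneg nn]
    obtain ⟨n1, hn1, hn1b⟩ := hcon |γ|
    obtain ⟨n2, hn2, hn2b⟩ := hcon (|n1| + |γ|)
    have hstar : ∃ n : ℤ, (β + n • α ∈ T.toTData.R) ∧ |γ| < |n| ∧
        T.toTData.pr (β + n • α) (β + n • α) ≠ 0 := by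
      by_cases hq1 : T.toTData.pr (β + n1 • α) (β + n1 • α) = 0
      · refine ⟨n2, hn2, by linarith [abs_nonneg n1], ?_⟩
        intro hq2
        have hne : n1 ≠ n2 := by
          intro h
          rw [h] at hn2b
          linarith [abs_nonneg γ]
        have hsum := key3 n1 n2 hne hq1 hq2
        have habs : |n2| = |γ + n1| := by rw [show n2 = -(γ + n1) from by omega, abs_neg]
        have h7 : |γ + n1| ≤ |γ| + |n1| := abs_add_le _ _
        linarith
      · exact ⟨n1, hn1, hn1b, hq1⟩
    obtain ⟨ns, hns, hnsb, hQs⟩ := hstar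
    obtain ⟨Ms, hMs⟩ := Qint ns hns hQs
    have hMs0 : Ms ≠ 0 := by
      rintro rfl
      have h0 : ((γ : F) + 2 * (ns : F)) * T.toTData.pr α α = 0 := by
        push_cast at hMs
        linear_combination -hMs
      rcases mul_eq_zero.mp h0 with h | h
      · exact hg2 ns hnsb h
      · exact hK0 h
    have hMF : (Ms : F) ≠ 0 := Int.cast_ne_zero.mpr hMs0
    set q0 : ℚ := ((γ : ℚ) + 2 * (ns : ℚ)) / (Ms : ℚ) - (γ : ℚ) * (ns : ℚ) - (ns : ℚ) ^ 2
      with hq0def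
    have hcast : (Ms : F) * ((q0 : ℚ) : F)
        = ((γ : F) + 2 * (ns : F)) - (Ms : F) * ((γ : F) * (ns : F))
          - (Ms : F) * (ns : F) ^ 2 := by
      rw [hq0def]
      push_cast
      field_simp
    have hs : T.toTData.pr β β = ((q0 : ℚ) : F) * T.toTData.pr α α := by
      apply mul_left_cancel₀ hMF
      have h6 := hQ ns
      linear_combination hMs - (Ms : F) * h6 - T.toTData.pr α α * hcast
    obtain ⟨n3, hn3, hn3b⟩ := hcon (|γ| + ⌈|q0|⌉ + 3)
    have hceil : |q0| ≤ ((⌈|q0|⌉ : ℤ) : ℚ) := Int.le_ceil _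
    have hq0nn : (0 : ℚ) ≤ |q0| := abs_nonneg _
    have hceilnn : (0 : ℤ) ≤ ⌈|q0|⌉ := Int.ceil_nonneg hq0nn
    have hn3γ : |γ| < |n3| := by linarith [hceilnn]
    have hn3big : (|γ| : ℚ) + |q0| + 3 ≤ (|n3| : ℚ) := by
      have h7 : ((|γ| + ⌈|q0|⌉ + 3 : ℤ) : ℚ) < ((|n3| : ℤ) : ℚ) := by exact_mod_cast hn3b
      push_cast at h7
      linarith
    have habs3 : |(n3 : ℚ)| = ((|n3| : ℤ) : ℚ) := by push_cast; rfl
    have hQn3 : T.toTData.pr (β + n3 • α) (β + n3 • α) ≠ 0 := by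
      intro h0
      have h6 := hQ n3
      rw [h0, hs] at h6
      have h7 : ((q0 + (γ : ℚ) * (n3 : ℚ) + (n3 : ℚ) ^ 2 : ℚ) : F) * T.toTData.pr α α = 0 := by
        push_cast
        linear_combination (-1 : F) * h6
      have h8 : q0 + (γ : ℚ) * (n3 : ℚ) + (n3 : ℚ) ^ 2 = 0 := by
        rcases mul_eq_zero.mp h7 with h | h
        · exact_mod_cast h
        · exact absurd h hK0
      have h9 : |q0| = |(γ : ℚ) * (n3 : ℚ) + (n3 : ℚ) ^ 2| := by
        rw [show q0 = -((γ : ℚ) * (n3 : ℚ) + (n3 : ℚ) ^ 2) from by linarith, abs_neg]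
      have h11 : |(n3 : ℚ) ^ 2| ≤ |(γ : ℚ) * (n3 : ℚ) + (n3 : ℚ) ^ 2| + |(γ : ℚ) * (n3 : ℚ)| := by
        calc |(n3 : ℚ) ^ 2| = |((γ : ℚ) * (n3 : ℚ) + (n3 : ℚ) ^ 2) + (-((γ : ℚ) * (n3 : ℚ)))| := by
              ring_nf
          _ ≤ |(γ : ℚ) * (n3 : ℚ) + (n3 : ℚ) ^ 2| + |(-((γ : ℚ) * (n3 : ℚ)))| := abs_add_le _ _
          _ = |(γ : ℚ) * (n3 : ℚ) + (n3 : ℚ) ^ 2| + |(γ : ℚ) * (n3 : ℚ)| := by rw [abs_neg]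
      rw [abs_of_nonneg (sq_nonneg ((n3 : ℚ))), abs_mul] at h11
      have h10 : (n3 : ℚ) ^ 2 - |(γ : ℚ)| * |(n3 : ℚ)|
          ≤ |(γ : ℚ) * (n3 : ℚ) + (n3 : ℚ) ^ 2| := by linarith
      -- now the size contradiction
      have hγQ : |(γ : ℚ)| = ((|γ| : ℤ) : ℚ) := by push_cast; rfl
      have hsq3 : (n3 : ℚ) ^ 2 = ((|n3| : ℤ) : ℚ) ^ 2 := by rw [← habs3, sq_abs]
      set gq : ℚ := ((|γ| : ℤ) : ℚ) with hgq
      set xq : ℚ := ((|n3| : ℤ) : ℚ) with hxq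
      have hgnn : (0 : ℚ) ≤ gq := by rw [hgq]; exact_mod_cast abs_nonneg γ
      have hxnn : (0 : ℚ) ≤ xq := by rw [hxq]; exact_mod_cast abs_nonneg n3
      -- xq * (xq - gq) ≤ |q0|
      have hkey : xq ^ 2 - gq * xq ≤ |q0| := by
        calc xq ^ 2 - gq * xq = (n3 : ℚ) ^ 2 - |(γ : ℚ)| * |(n3 : ℚ)| := by
              rw [hγQ, habs3, hsq3]
          _ ≤ |(γ : ℚ) * (n3 : ℚ) + (n3 : ℚ) ^ 2| := h10
          _ = |q0| := h9.symm
      have hge : |q0| + 3 ≤ xq - gq := by linarith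
      have hch : xq * (|q0| + 3) ≤ xq * (xq - gq) := by
        apply mul_le_mul_of_nonneg_left hge hxnn
      have hx3 : (3 : ℚ) ≤ xq := by linarith
      nlinarith [hkey, hch, hx3, hq0nn]
    obtain ⟨M3, hM3⟩ := Qint n3 hn3 hQn3
    have hM30 : M3 ≠ 0 := by
      rintro rfl
      have h0 : ((γ : F) + 2 * (n3 : F)) * T.toTData.pr α α = 0 := by
        push_cast at hM3
        linear_combination -hM3
      rcases mul_eq_zero.mp h0 with h | h
      · exact hg2 n3 hn3γ h
      · exact hK0 h
    have hEQ : (M3 : ℚ) * (q0 + (γ : ℚ) * (n3 : ℚ) + (n3 : ℚ) ^ 2) = (γ : ℚ) + 2 * (n3 : ℚ) := by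
      have h6 := hQ n3
      rw [hs] at h6
      have h9 : (((M3 : ℚ) * (q0 + (γ : ℚ) * (n3 : ℚ) + (n3 : ℚ) ^ 2) : ℚ) : F)
          * T.toTData.pr α α
          = (((γ : ℚ) + 2 * (n3 : ℚ) : ℚ) : F) * T.toTData.pr α α := by
        push_cast
        linear_combination hM3 - (M3 : F) * h6
      have h10 := mul_right_cancel₀ hK0 h9
      exact_mod_cast h10
    have hM31 : (1 : ℚ) ≤ |(M3 : ℚ)| := by
      have : (1 : ℤ) ≤ |M3| := Int.one_le_abs hM30
      calc (1:ℚ) ≤ ((|M3| : ℤ) : ℚ) := by exact_mod_cast this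
        _ = |(M3 : ℚ)| := by push_cast; rfl
    -- sizes
    have hs1 : |(γ : ℚ) + 2 * (n3 : ℚ)| = |(M3 : ℚ)| * |q0 + (γ : ℚ) * (n3 : ℚ) + (n3 : ℚ) ^ 2| := by
      rw [← abs_mul, hEQ]
    have hs2 : |q0 + (γ : ℚ) * (n3 : ℚ) + (n3 : ℚ) ^ 2|
        ≥ (n3 : ℚ) ^ 2 - |(γ : ℚ)| * |(n3 : ℚ)| - |q0| := by
      have h11 : |(γ : ℚ) * (n3 : ℚ) + (n3 : ℚ) ^ 2|
          ≤ |q0 + (γ : ℚ) * (n3 : ℚ) + (n3 : ℚ) ^ 2| + |q0| := by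
        calc |(γ : ℚ) * (n3 : ℚ) + (n3 : ℚ) ^ 2|
            = |(q0 + (γ : ℚ) * (n3 : ℚ) + (n3 : ℚ) ^ 2) + (-q0)| := by ring_nf
          _ ≤ |q0 + (γ : ℚ) * (n3 : ℚ) + (n3 : ℚ) ^ 2| + |(-q0)| := abs_add_le _ _
          _ = |q0 + (γ : ℚ) * (n3 : ℚ) + (n3 : ℚ) ^ 2| + |q0| := by rw [abs_neg]
      have h12 : (n3 : ℚ) ^ 2 - |(γ : ℚ)| * |(n3 : ℚ)| ≤ |(γ : ℚ) * (n3 : ℚ) + (n3 : ℚ) ^ 2| := by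
        have h13 : |(n3 : ℚ) ^ 2| ≤ |(γ : ℚ) * (n3 : ℚ) + (n3 : ℚ) ^ 2| + |(γ : ℚ) * (n3 : ℚ)| := by
          calc |(n3 : ℚ) ^ 2| = |((γ : ℚ) * (n3 : ℚ) + (n3 : ℚ) ^ 2) + (-((γ : ℚ) * (n3 : ℚ)))| := by
                ring_nf
            _ ≤ |(γ : ℚ) * (n3 : ℚ) + (n3 : ℚ) ^ 2| + |(-((γ : ℚ) * (n3 : ℚ)))| := abs_add_le _ _
            _ = |(γ : ℚ) * (n3 : ℚ) + (n3 : ℚ) ^ 2| + |(γ : ℚ) * (n3 : ℚ)| := by rw [abs_neg]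
        rw [abs_mul, abs_of_nonneg (sq_nonneg ((n3 : ℚ)))] at h13
        linarith
      linarith
    have hs3 : |(γ : ℚ) + 2 * (n3 : ℚ)| ≤ |(γ : ℚ)| + 2 * |(n3 : ℚ)| := by
      calc |(γ : ℚ) + 2 * (n3 : ℚ)| ≤ |(γ : ℚ)| + |2 * (n3 : ℚ)| := abs_add_le _ _
        _ = |(γ : ℚ)| + 2 * |(n3 : ℚ)| := by rw [abs_mul]; norm_num
    have hq2 : |q0 + (γ : ℚ) * (n3 : ℚ) + (n3 : ℚ) ^ 2|
        ≤ |(M3 : ℚ)| * |q0 + (γ : ℚ) * (n3 : ℚ) + (n3 : ℚ) ^ 2| := by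
      nlinarith [abs_nonneg (q0 + (γ : ℚ) * (n3 : ℚ) + (n3 : ℚ) ^ 2), hM31]
    have hγQ : |(γ : ℚ)| = ((|γ| : ℤ) : ℚ) := by push_cast; rfl
    have hsq3 : (n3 : ℚ) ^ 2 = ((|n3| : ℤ) : ℚ) ^ 2 := by rw [← habs3, sq_abs]
    set gq : ℚ := ((|γ| : ℤ) : ℚ) with hgq
    set xq : ℚ := ((|n3| : ℤ) : ℚ) with hxq
    have hgnn : (0 : ℚ) ≤ gq := by rw [hgq]; exact_mod_cast abs_nonneg γ
    have hxnn : (0 : ℚ) ≤ xq := by rw [hxq]; exact_mod_cast abs_nonneg n3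
    -- chain: xq^2 - gq*xq - |q0| ≤ A ≤ |M3| * A = |γ+2n3| ≤ gq + 2 xq
    have hA : xq ^ 2 - gq * xq - |q0| ≤ gq + 2 * xq := by
      calc xq ^ 2 - gq * xq - |q0|
          = (n3 : ℚ) ^ 2 - |(γ : ℚ)| * |(n3 : ℚ)| - |q0| := by rw [hγQ, habs3, hsq3]
        _ ≤ |q0 + (γ : ℚ) * (n3 : ℚ) + (n3 : ℚ) ^ 2| := hs2
        _ ≤ |(M3 : ℚ)| * |q0 + (γ : ℚ) * (n3 : ℚ) + (n3 : ℚ) ^ 2| := hq2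
        _ = |(γ : ℚ) + 2 * (n3 : ℚ)| := hs1.symm
        _ ≤ |(γ : ℚ)| + 2 * |(n3 : ℚ)| := hs3
        _ = gq + 2 * xq := by rw [hγQ, habs3]
    have hge : |q0| + 1 ≤ xq - gq - 2 := by linarith
    have hch : xq * (|q0| + 1) ≤ xq * (xq - gq - 2) := mul_le_mul_of_nonneg_left hge hxnn
    have hx3 : (3 : ℚ) ≤ xq := by linarith
    nlinarith [hA, hch, hx3, hq0nn]
  -- extract max and min of the string
  obtain ⟨N, hN⟩ := hbdd
  have hex : ∃ n : ℤ, β + n • α ∈ T.toTData.R := ⟨0, hP0⟩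
  obtain ⟨u', hu'P, hu'max⟩ := Int.exists_greatest_of_bdd
    ⟨N, fun z hz => (abs_le.mp (hN z hz)).2⟩ hex
  obtain ⟨l, hlP, hlmin⟩ := Int.exists_least_of_bdd
    ⟨-N, fun z hz => (abs_le.mp (hN z hz)).1⟩ hex
  have hl0 : l ≤ 0 := hlmin 0 hP0
  have hu0 : 0 ≤ u' := hu'max 0 hP0
  -- up string at u'
  obtain ⟨p, m, hm1, hm2⟩ := Up u' hu'P
  have htop : β + (u' + (p : ℤ) - (0 : ℤ)) • α ∈ T.toTData.R := hm2 0 (Nat.zero_le _)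
  have hp0 : u' + (p : ℤ) - 0 ≤ u' := hu'max _ htop
  have hbot : β + (u' + (p : ℤ) - (m : ℤ)) • α ∈ T.toTData.R := hm2 m le_rfl
  have hlb : l ≤ u' + (p : ℤ) - (m : ℤ) := hlmin _ hbot
  -- down string at l
  obtain ⟨p', m', hm1', hm2'⟩ := Down l hlP
  have htop' : β + (l - (p' : ℤ) + (0 : ℤ)) • α ∈ T.toTData.R := hm2' 0 (Nat.zero_le _)
  have hp0' : l ≤ l - (p' : ℤ) + 0 := hlmin _ htop'
  have hp'z : (p' : ℤ) = 0 := by omega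
  have hbot' : β + (l - (p' : ℤ) + (m' : ℤ)) • α ∈ T.toTData.R := hm2' m' le_rfl
  have hub' : l - (p' : ℤ) + (m' : ℤ) ≤ u' := hu'max _ hbot'
  -- γ = -(l + u')
  have hγeq : γ = -(l + u') := by omega
  have hm'eq : (m' : ℤ) = u' - l := by omega
  -- final answer
  refine ⟨(-l).toNat, u'.toNat, ?_, ?_⟩
  · have hcast1 : (((-l).toNat : ℕ) : ℤ) = -l := Int.toNat_of_nonneg (by omega)
    have hcast2 : ((u'.toNat : ℕ) : ℤ) = u' := Int.toNat_of_nonneg hu0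
    have hγF : (((-l).toNat : ℕ) : F) - ((u'.toNat : ℕ) : F) = (γ : F) := by
      have h1 : ((((-l).toNat : ℕ) : ℤ) : F) - (((u'.toNat : ℕ) : ℤ) : F) = (γ : F) := by
        rw [hcast1, hcast2]
        have : γ = -l - u' := by omega
        rw [this]
        push_cast
        ring
      push_cast at h1 ⊢
      exact h1
    rw [hγF, hγk]
  · intro n
    have hcast1 : (((-l).toNat : ℕ) : ℤ) = -l := Int.toNat_of_nonneg (by omega)
    have hcast2 : ((u'.toNat : ℕ) : ℤ) = u' := Int.toNat_of_nonneg hu0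
    constructor
    · intro hmem
      have hl' := hlmin n hmem
      have hu'' := hu'max n hmem
      omega
    · rintro ⟨h1, h2⟩
      have hile : (n - l).toNat ≤ m' := by omega
      have h3 := hm2' (n - l).toNat hile
      rw [show l - (p' : ℤ) + (((n - l).toNat : ℕ) : ℤ) = n from by omega] at h3
      exact h3
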